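/- Let f : S¹ → ℝ⁺ be a probability density on the unit circle, p ∈ S¹, α ∈ (0,1], φ ∈ (0,π), and let μ be the probability measure with density f. If f satisfies property P(p,α,φ), then the mean of μ in the normal chart centered at p satisfies |m(μ_p)| ≤ φ + ((1−α)/(4π))(π − φ)². -/

import Mathlib

open MeasureTheory Real Set Filter

noncomputable section

/-- The unit circle `S¹` in `ℝ² ≃ ℂ`. -/
abbrev S1 := {x : ℂ // ‖x‖ = 1}

/-- The arclength distance on `S¹`. -/
def dS1 (x p : S1) : ℝ := 2 * Real.arcsin (‖(x : ℂ) - (p : ℂ)‖ / 2)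

/-- The Fréchet functional of a measure `μ` on `S¹`. -/
def frechet (μ : Measure S1) (p : S1) : ℝ := (1/2) * ∫ x, (dS1 x p)^2 ∂μ

/-- The normal coordinate chart centered at `p`: `θ ↦ R_θ p`. -/
def chart (p : S1) (θ : ℝ) : S1 :=
  ⟨Complex.exp (θ * Complex.I) * (p : ℂ), by
    rw [norm_mul, Complex.norm_exp_ofReal_mul_I, p.2, mul_one]⟩

/-- The inverse chart, with values in `[-π, π)`. -/
def invChart (p₀ : S1) (p : S1) : ℝ :=
  if Complex.arg ((p : ℂ) / (p₀ : ℂ)) = π then -π else Complex.arg ((p : ℂ) / (p₀ : ℂ))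

/-- The image measure `μ_{p₀}` of `μ` in the normal chart centered at `p₀`. -/
def chartMeasure (μ : Measure S1) (p₀ : S1) : Measure ℝ := Measure.map (invChart p₀) μ

/-- `m(μ_{p₀})`, the Euclidean mean of the image measure in the chart centered at `p₀`. -/
def mMean (μ : Measure S1) (p₀ : S1) : ℝ := ∫ t, t ∂(chartMeasure μ p₀)

/-- The antipodal point (cut locus) of `p`. -/
def antipode (p : S1) : S1 := ⟨-(p : ℂ), by rw [norm_neg]; exact p.2⟩

/-- The (left-continuous extension of the) derivative of `θ ↦ F_μ(e_{p₀}(θ))`. -/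
def extDerivS1 (μ : Measure S1) (p₀ : S1) (θ : ℝ) : ℝ :=
  if 0 ≤ θ then θ - 2*π*(chartMeasure μ p₀ (Ico (-π) (-π+θ))).toReal - mMean μ p₀
  else θ + 2*π*(chartMeasure μ p₀ (Ico (π+θ) π)).toReal - mMean μ p₀

def basePt : S1 := ⟨1, by norm_num⟩

/-- The (unnormalized) arclength measure on `S¹`, of total mass `2π`. -/
def arcMeasure : Measure S1 := Measure.map (chart basePt) (volume.restrict (Ico (-π) π))

/-- Property `P(p, α, φ)` for a density `f` on `S¹`. -/
def propP (f : S1 → ℝ) (p : S1) (α φ : ℝ) : Prop :=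
  ∀ θ ∈ Ico (-π) π, φ ≤ |θ| → f (chart p θ) ≤ (1 - α)/(2*π)

/-!
Rotation invariance of arclength (on `ℝ ⧸ 2πℤ`, rotation by `p` is a translation) gives
`m(μ_p) = ∫_{[-π,π)} θ f_p(θ) dθ`. With `c = (1-α)/(2π)`, pointwise
`θ f_p(θ) ≤ φ f_p(θ) + c (θ - φ)⁺`, since `f_p ≤ c` wherever `θ > φ`; integrating against
`∫ f_p = 1` gives `m(μ_p) ≤ φ + c (π - φ)² / 2`, and the same argument for `-θ` bounds `-m(μ_p)`.
-/

theorem integral_mul_le_add_integral_max_sub {α : Type*} [MeasurableSpace α] {ν : Measure α}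
    {g G : α → ℝ} {φ c : ℝ} (hG0 : ∀ᵐ x ∂ν, 0 ≤ G x) (hGi : Integrable G ν)
    (hG1 : ∫ x, G x ∂ν = 1) (hgG : Integrable (fun x => g x * G x) ν)
    (hg : Integrable (fun x => max (g x - φ) 0) ν) (hbd : ∀ᵐ x ∂ν, φ < g x → G x ≤ c) :
    ∫ x, g x * G x ∂ν ≤ φ + c * ∫ x, max (g x - φ) 0 ∂ν := by
  have hpt : ∀ᵐ x ∂ν, g x * G x ≤ φ * G x + c * max (g x - φ) 0 := by
    filter_upwards [hG0, hbd] with x hx0 hxc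
    rcases le_or_gt (g x) φ with hle | hlt
    · rw [max_eq_right (sub_nonpos.2 hle), mul_zero, add_zero]
      exact mul_le_mul_of_nonneg_right hle hx0
    · rw [max_eq_left (sub_nonneg.2 hlt.le)]
      nlinarith [hxc hlt]
  calc ∫ x, g x * G x ∂ν ≤ ∫ x, (φ * G x + c * max (g x - φ) 0) ∂ν :=
        integral_mono_ae hgG ((hGi.const_mul φ).add (hg.const_mul c)) hpt
    _ = φ + c * ∫ x, max (g x - φ) 0 ∂ν := by
        rw [integral_add (hGi.const_mul φ) (hg.const_mul c), integral_const_mul,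
          integral_const_mul, hG1, mul_one]

theorem intervalIntegral_max_sub_zero {a b φ : ℝ} (ha : a ≤ φ) (hb : φ ≤ b) :
    ∫ x in a..b, max (x - φ) 0 = (b - φ) ^ 2 / 2 := by
  have hcont : Continuous fun x : ℝ => max (x - φ) 0 := by fun_prop
  rw [← intervalIntegral.integral_add_adjacent_intervals (b := φ)
    (hcont.intervalIntegrable _ _) (hcont.intervalIntegrable _ _)]
  have hleft : ∫ x in a..φ, max (x - φ) 0 = 0 := by
    calc ∫ x in a..φ, max (x - φ) 0 = ∫ _ in a..φ, (0 : ℝ) :=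
          intervalIntegral.integral_congr fun x hx => by
            rw [uIcc_of_le ha] at hx
            exact max_eq_right (sub_nonpos.2 hx.2)
      _ = 0 := intervalIntegral.integral_zero
  have hright : ∫ x in φ..b, max (x - φ) 0 = ∫ x in φ..b, (x - φ) := by
    refine intervalIntegral.integral_congr fun x hx => ?_
    rw [uIcc_of_le hb] at hx
    exact max_eq_left (sub_nonneg.2 hx.1)
  rw [hleft, hright, intervalIntegral.integral_comp_sub_right (fun x => x), integral_id]
  ring

theorem abs_setIntegral_Ico_mul_le {a φ c : ℝ} {G : ℝ → ℝ} (hG0 : ∀ θ ∈ Ico (-a) a, 0 ≤ G θ)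
    (hGi : IntegrableOn G (Ico (-a) a)) (hG1 : ∫ θ in Ico (-a) a, G θ = 1)
    (hφa : -a ≤ φ) (hφa' : φ ≤ a) (hbd : ∀ θ ∈ Ico (-a) a, φ ≤ |θ| → G θ ≤ c) :
    |∫ θ in Ico (-a) a, θ * G θ| ≤ φ + c * ((a - φ) ^ 2 / 2) := by
  have hmem : ∀ᵐ θ ∂(volume.restrict (Ico (-a) a)), θ ∈ Ico (-a) a :=
    ae_restrict_mem measurableSet_Ico
  have hθG : IntegrableOn (fun θ => θ * G θ) (Ico (-a) a) := by
    refine hGi.bdd_mul (c := a) measurable_id.aestronglyMeasurable ?_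
    filter_upwards [hmem] with θ hθ
    exact abs_le.2 ⟨hθ.1, hθ.2.le⟩
  have hIco : ∀ g : ℝ → ℝ, ∫ θ in Ico (-a) a, g θ = ∫ θ in (-a)..a, g θ := fun g => by
    rw [intervalIntegral.integral_of_le (by linarith), integral_Ico_eq_integral_Ioo,
      integral_Ioc_eq_integral_Ioo]
  have htail : ∫ θ in Ico (-a) a, max (θ - φ) 0 = (a - φ) ^ 2 / 2 := by
    rw [hIco, intervalIntegral_max_sub_zero hφa hφa']
  have htail_neg : ∫ θ in Ico (-a) a, max (-θ - φ) 0 = (a - φ) ^ 2 / 2 := by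
    rw [hIco, intervalIntegral.integral_comp_neg (fun θ => max (θ - φ) 0), neg_neg,
      intervalIntegral_max_sub_zero hφa hφa']
  have htail_int : ∀ g : ℝ → ℝ, Continuous g →
      IntegrableOn (fun θ => max (g θ - φ) 0) (Ico (-a) a) := fun g hg =>
    (Continuous.integrableOn_Icc (by fun_prop)).mono_set Ico_subset_Icc_self
  have hbd' : ∀ g : ℝ → ℝ, (∀ θ, g θ ≤ |θ|) →
      ∀ᵐ θ ∂(volume.restrict (Ico (-a) a)), φ < g θ → G θ ≤ c := fun g hg => by
    filter_upwards [hmem] with θ hθ hφθ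
    exact hbd θ hθ (hφθ.le.trans (hg θ))
  have hG0' : ∀ᵐ θ ∂(volume.restrict (Ico (-a) a)), 0 ≤ G θ := by
    filter_upwards [hmem] with θ hθ
    exact hG0 θ hθ
  have hupper := integral_mul_le_add_integral_max_sub hG0' hGi hG1 hθG
    (htail_int id continuous_id) (hbd' id le_abs_self)
  have hlower := integral_mul_le_add_integral_max_sub (g := Neg.neg) hG0' hGi hG1
    (by simpa only [neg_mul] using Integrable.fun_neg hθG) (htail_int _ continuous_neg)
    (hbd' _ neg_le_abs)
  rw [htail] at hupper
  simp only [neg_mul, integral_neg, htail_neg] at hlower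
  exact abs_le.2 ⟨by linarith, hupper⟩

theorem S1.coe_ne_zero (p : S1) : (p : ℂ) ≠ 0 := by
  rw [← norm_pos_iff, p.2]
  exact one_pos

theorem measurable_invChart (p : S1) : Measurable (invChart p) := by
  have harg : Measurable fun x : S1 => Complex.arg ((x : ℂ) / (p : ℂ)) :=
    Complex.measurable_arg.comp (measurable_subtype_coe.div_const _)
  exact Measurable.ite (harg (measurableSet_singleton π)) measurable_const harg

theorem measurable_chart (p : S1) : Measurable (chart p) :=
  (Continuous.subtype_mk (by fun_prop) _).measurable

theorem invChart_chart (p : S1) {θ : ℝ} (hθ : θ ∈ Ico (-π) π) : invChart p (chart p θ) = θ := by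
  have hdiv : (chart p θ : ℂ) / (p : ℂ) = Complex.exp (θ * Complex.I) :=
    mul_div_cancel_right₀ _ p.coe_ne_zero
  unfold invChart
  rcases hθ.1.eq_or_lt with rfl | hlt
  · rw [hdiv, Complex.ofReal_neg, neg_mul, Complex.exp_neg, Complex.exp_pi_mul_I]
    norm_num
  · have harg : Complex.arg (Complex.exp (θ * Complex.I)) = θ := by
      rw [Complex.exp_mul_I]
      exact_mod_cast Complex.arg_cos_add_sin_mul_I ⟨hlt, hθ.2.le⟩
    rw [hdiv, harg, if_neg hθ.2.ne]

instance fact_two_pi_pos : Fact (0 < 2 * π) := ⟨two_pi_pos⟩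

def circleChart (p : S1) (x : AddCircle (2 * π)) : S1 :=
  ⟨(x.toCircle : ℂ) * p, by rw [norm_mul, Circle.norm_coe, p.2, one_mul]⟩

theorem circleChart_coe (p : S1) (θ : ℝ) : circleChart p θ = chart p θ := by
  apply Subtype.ext
  simp only [circleChart, chart, AddCircle.toCircle_apply_mk, Circle.coe_exp]
  rw [div_self two_pi_pos.ne', one_mul]

theorem circleChart_add (p : S1) (x y : AddCircle (2 * π)) :
    circleChart p (x + y) = circleChart (circleChart p y) x := by
  apply Subtype.ext
  simp only [circleChart, AddCircle.toCircle_add, Circle.coe_mul, mul_assoc]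

theorem circleChart_arg (p : S1) : circleChart basePt (Complex.arg p) = p := by
  apply Subtype.ext
  rw [circleChart_coe]
  show Complex.exp (Complex.arg p * Complex.I) * 1 = p
  rw [mul_one]
  conv_rhs => rw [← Complex.norm_mul_exp_arg_mul_I (p : ℂ), p.2]
  rw [Complex.ofReal_one, one_mul]

theorem measurable_circleChart (p : S1) : Measurable (circleChart p) :=
  (((continuous_subtype_val.comp AddCircle.continuous_toCircle).mul
    continuous_const).subtype_mk _).measurable

theorem map_chart_eq_map_circleChart (p : S1) :
    Measure.map (chart p) (volume.restrict (Ico (-π) π)) = Measure.map (circleChart p) volume := by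
  have hchart : chart p = circleChart p ∘ ((↑) : ℝ → AddCircle (2 * π)) :=
    funext fun θ => (circleChart_coe p θ).symm
  have hvol : volume.restrict (Ico (-π) π) = volume.restrict (Ioc (-π) (-π + 2 * π)) := by
    rw [show -π + 2 * π = π by ring]
    exact Measure.restrict_congr_set Ico_ae_eq_Ioc
  have hmk := AddCircle.measurePreserving_mk (2 * π) (-π)
  rw [hchart, hvol, ← Measure.map_map (measurable_circleChart p) hmk.measurable, hmk.map_eq]

theorem arcMeasure_eq_map_chart (p : S1) :
    arcMeasure = Measure.map (chart p) (volume.restrict (Ico (-π) π)) := by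
  have hrot : circleChart p = circleChart basePt ∘ (· + (Complex.arg p : AddCircle (2 * π))) :=
    funext fun x => by rw [Function.comp_apply, circleChart_add, circleChart_arg]
  rw [arcMeasure, map_chart_eq_map_circleChart, map_chart_eq_map_circleChart, hrot,
    ← Measure.map_map (measurable_circleChart _) (measurable_add_const _),
    (measurePreserving_add_right volume _).map_eq]

theorem mMean_withDensity {f : S1 → ℝ} (hf : ∀ x, 0 ≤ f x) (hfm : AEMeasurable f arcMeasure)
    (p : S1) :
    mMean (arcMeasure.withDensity fun x => ENNReal.ofReal (f x)) p
      = ∫ θ in Ico (-π) π, θ * f (chart p θ) := by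
  have hfm_map := hfm
  rw [arcMeasure_eq_map_chart p] at hfm_map
  calc mMean (arcMeasure.withDensity fun x => ENNReal.ofReal (f x)) p
      = ∫ x, invChart p x ∂(arcMeasure.withDensity fun x => ENNReal.ofReal (f x)) :=
        integral_map (measurable_invChart p).aemeasurable aestronglyMeasurable_id
    _ = ∫ x, f x * invChart p x ∂arcMeasure := by
        rw [integral_withDensity_eq_integral_toReal_smul₀ hfm.ennreal_ofReal
          (ae_of_all _ fun _ => ENNReal.ofReal_lt_top)]
        simp only [ENNReal.toReal_ofReal (hf _), smul_eq_mul]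
    _ = ∫ θ in Ico (-π) π, f (chart p θ) * invChart p (chart p θ) := by
        rw [arcMeasure_eq_map_chart p]
        exact integral_map (measurable_chart p).aemeasurable
          (hfm_map.aestronglyMeasurable.mul (measurable_invChart p).aestronglyMeasurable)
    _ = ∫ θ in Ico (-π) π, θ * f (chart p θ) :=
        setIntegral_congr_fun measurableSet_Ico fun θ hθ => by
          rw [invChart_chart p hθ, mul_comm]

theorem propP_mean_bound_general (f : S1 → ℝ) (hf : ∀ x, 0 ≤ f x)
    (hprob : ∫ x, f x ∂arcMeasure = 1) (μ : Measure S1)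
    (hμ : μ = arcMeasure.withDensity fun x => ENNReal.ofReal (f x))
    (p : S1) (α φ : ℝ) (hφ₀ : 0 < φ) (hφ : φ < π)
    (h : propP f p α φ) :
    |mMean μ p| ≤ φ + (1 - α) / (4*π) * (π - φ)^2 := by
  have hfi : Integrable f arcMeasure := by
    by_contra hfi
    rw [integral_undef hfi] at hprob
    exact zero_ne_one hprob
  rw [hμ, mMean_withDensity hf hfi.aemeasurable]
  rw [arcMeasure_eq_map_chart p] at hprob hfi
  have hchart := (measurable_chart p).aemeasurable (μ := volume.restrict (Ico (-π) π))
  have hbound := abs_setIntegral_Ico_mul_le (G := fun θ => f (chart p θ))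
    (fun θ _ => hf _) (hfi.comp_aemeasurable hchart)
    (by rwa [integral_map hchart hfi.aestronglyMeasurable] at hprob)
    (by linarith) hφ.le h
  exact hbound.trans_eq (by ring)

/-- Lemma `lemme.properties` (3): if the density `f` of `μ` satisfies
`P(p,α,φ)` then `|m(μ_p)| ≤ φ + (1-α)/(4π) · (π-φ)²`. -/
theorem propP_mean_bound (f : S1 → ℝ) (hf : ∀ x, 0 ≤ f x)
    (hprob : ∫ x, f x ∂arcMeasure = 1) (μ : Measure S1)
    (hμ : μ = arcMeasure.withDensity fun x => ENNReal.ofReal (f x))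
    (p : S1) (α φ : ℝ) (hα₀ : 0 < α) (hα : α ≤ 1) (hφ₀ : 0 < φ) (hφ : φ < π)
    (h : propP f p α φ) :
    |mMean μ p| ≤ φ + (1 - α) / (4*π) * (π - φ)^2 :=
  propP_mean_bound_general f hf hprob μ hμ p α φ hφ₀ hφ h
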